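/- Let A, Ã ∈ ℂ^{n×n}, let D be a diagonal matrix with nonnegative real entries, and suppose Ã is an ε-SV approximation of A with respect to D_in = D_out = D. Then Ã is a unit-circle ε-approximation of A with respect to degree matrix D: for every z ∈ ℂ with |z| = 1, the matrix D − S_{zA} is positive semidefinite and for all x, y ∈ ℂⁿ, |x*(z·Ã − z·A)y| ≤ (ε/2)·(x*(D − S_{zA})x + y*(D − S_{zA})y), where S_M := (M + M*)/2. -/

import Mathlib

/-!
Write `P = D^{1/2}` and `Q` for its pseudo-inverse. Since the columns of `M` vanish where `D` does,
`D - M - Mᴴ + M D⁻ Mᴴ = (P - M Q)(P - M Q)ᴴ ⪰ 0`, hence `2 (D - S_M) ⪰ D - M D⁻ Mᴴ`.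
Taking `M = z A` and `M = (z A)ᴴ` (for `|z| = 1` these have the same `M D⁻ Mᴴ` as `A`, resp. `Aᴴ`, and
the same `S_M`) bounds both error matrices `E` and `F` of the SV approximation by `2 (D - S_{zA})`,
which turns the constant `ε / 4` into `ε / 2`.
-/

open Matrix ComplexOrder

/-- `Ã` is an `ε`-SV approximation of `A` with respect to the diagonal degree matrices
`D_in = diag d` and `D_out = diag e` (with `D⁻` the pseudo-inverse of a nonnegative
diagonal matrix, realized by real inversion with convention `0⁻¹ = 0`). -/
noncomputable def IsSVApprox {m n : ℕ} (ε : ℝ) (d : Fin m → ℝ) (e : Fin n → ℝ)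
    (A Atil : Matrix (Fin m) (Fin n) ℂ) : Prop :=
  (∀ i, d i = 0 → ∀ j, A i j = 0) ∧
  (∀ j, e j = 0 → ∀ i, A i j = 0) ∧
  ((Matrix.diagonal fun i => (d i : ℂ)) -
      A * (Matrix.diagonal fun j => ((e j)⁻¹ : ℂ)) * Aᴴ).PosSemidef ∧
  ((Matrix.diagonal fun j => (e j : ℂ)) -
      Aᴴ * (Matrix.diagonal fun i => ((d i)⁻¹ : ℂ)) * A).PosSemidef ∧
  ∀ (x : Fin m → ℂ) (y : Fin n → ℂ),
    ‖star x ⬝ᵥ (Atil - A).mulVec y‖ ≤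
      ε / 4 *
        ((star x ⬝ᵥ ((Matrix.diagonal fun i => (d i : ℂ)) -
            A * (Matrix.diagonal fun j => ((e j)⁻¹ : ℂ)) * Aᴴ).mulVec x).re +
         (star y ⬝ᵥ ((Matrix.diagonal fun j => (e j : ℂ)) -
            Aᴴ * (Matrix.diagonal fun i => ((d i)⁻¹ : ℂ)) * A).mulVec y).re)

/-- The symmetrization `S_M := (M + M*)/2`. -/
noncomputable def symPart {n : ℕ} (M : Matrix (Fin n) (Fin n) ℂ) :
    Matrix (Fin n) (Fin n) ℂ :=
  (2 : ℂ)⁻¹ • (M + Mᴴ)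

section DegreeMatrix

variable {ι : Type*} [Fintype ι] [DecidableEq ι] {d : ι → ℝ}

lemma mul_diagonal_inv_sqrt_mul_sqrt (hd : ∀ i, 0 ≤ d i) {M : Matrix ι ι ℂ}
    (hM : ∀ j, d j = 0 → ∀ i, M i j = 0) :
    M * (diagonal (fun j => (√(d j) : ℂ)⁻¹) * diagonal (fun j => (√(d j) : ℂ))) = M := by
  ext i j
  rw [diagonal_mul_diagonal, mul_diagonal]
  by_cases hj : d j = 0
  · simp [hM j hj i]
  · have : (√(d j) : ℂ) ≠ 0 := by exact_mod_cast (Real.sqrt_ne_zero (hd j)).mpr hj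
    rw [inv_mul_cancel₀ this, mul_one]

lemma posSemidef_diagonal_sub_add_mul_diagonal_inv_mul (hd : ∀ i, 0 ≤ d i)
    {M : Matrix ι ι ℂ} (hM : ∀ j, d j = 0 → ∀ i, M i j = 0) :
    (diagonal (fun i => (d i : ℂ)) - (M + Mᴴ) +
      M * diagonal (fun j => ((d j)⁻¹ : ℂ)) * Mᴴ).PosSemidef := by
  set P := diagonal fun i => (√(d i) : ℂ)
  set Q := diagonal fun i => (√(d i) : ℂ)⁻¹
  have hPP : P * P = diagonal fun i => (d i : ℂ) := by
    simp only [P, diagonal_mul_diagonal, ← Complex.ofReal_mul, Real.mul_self_sqrt (hd _)]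
  have hQQ : Q * Q = diagonal fun i => ((d i)⁻¹ : ℂ) := by
    simp only [Q, diagonal_mul_diagonal, ← mul_inv, ← Complex.ofReal_mul,
      Real.mul_self_sqrt (hd _)]
  have hP : Pᴴ = P := by simp [P]
  have hQ : Qᴴ = Q := by simp [Q]
  have hMQP : M * (Q * P) = M := mul_diagonal_inv_sqrt_mul_sqrt hd hM
  have hPQM : P * (Q * Mᴴ) = Mᴴ := by
    simpa [Matrix.mul_assoc, hP, hQ] using congrArg conjTranspose hMQP
  convert posSemidef_self_mul_conjTranspose (P - M * Q) using 1
  rw [conjTranspose_sub, conjTranspose_mul, hP, hQ, sub_mul, mul_sub, mul_sub, hPP, hPQM,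
    Matrix.mul_assoc M Q P, hMQP, Matrix.mul_assoc M Q, ← Matrix.mul_assoc Q, hQQ,
    Matrix.mul_assoc]
  abel

end DegreeMatrix

lemma smul_mul_mul_conjTranspose_smul {m n : Type*} [Fintype n] {z : ℂ} (hz : ‖z‖ = 1)
    (M : Matrix m n ℂ) (K : Matrix n n ℂ) : z • M * K * (z • M)ᴴ = M * K * Mᴴ := by
  have hzz : z * star z = 1 := by
    rw [Complex.star_def, Complex.mul_conj', hz]; norm_num
  rw [conjTranspose_smul, Matrix.smul_mul, Matrix.smul_mul, Matrix.mul_smul, smul_smul, hzz,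
    one_smul]

section SymPart

variable {n : ℕ} {d : Fin n → ℝ}

lemma symPart_conjTranspose (M : Matrix (Fin n) (Fin n) ℂ) : symPart Mᴴ = symPart M := by
  rw [symPart, symPart, conjTranspose_conjTranspose, add_comm]

lemma two_smul_diagonal_sub_symPart (M K : Matrix (Fin n) (Fin n) ℂ) :
    (2 : ℂ) • (diagonal (fun i => (d i : ℂ)) - symPart M) =
      (diagonal (fun i => (d i : ℂ)) - K) + (diagonal (fun i => (d i : ℂ)) - (M + Mᴴ) + K) := by
  rw [symPart]
  module

lemma posSemidef_diagonal_sub_symPart (hd : ∀ i, 0 ≤ d i) {M : Matrix (Fin n) (Fin n) ℂ}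
    (hM : ∀ j, d j = 0 → ∀ i, M i j = 0)
    (hE : (diagonal (fun i => (d i : ℂ)) - M * diagonal (fun j => ((d j)⁻¹ : ℂ)) * Mᴴ).PosSemidef) :
    (diagonal (fun i => (d i : ℂ)) - symPart M).PosSemidef := by
  have h := (hE.add (posSemidef_diagonal_sub_add_mul_diagonal_inv_mul hd hM)).smul
    (show (0 : ℂ) ≤ 2⁻¹ by norm_num [Complex.le_def])
  rwa [← two_smul_diagonal_sub_symPart, smul_smul, inv_mul_cancel₀ two_ne_zero, one_smul] at h

lemma re_dotProduct_le_two_mul_diagonal_sub_symPart (hd : ∀ i, 0 ≤ d i)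
    {M : Matrix (Fin n) (Fin n) ℂ} (hM : ∀ j, d j = 0 → ∀ i, M i j = 0) (x : Fin n → ℂ) :
    (star x ⬝ᵥ (diagonal (fun i => (d i : ℂ)) -
        M * diagonal (fun j => ((d j)⁻¹ : ℂ)) * Mᴴ) *ᵥ x).re ≤
      2 * (star x ⬝ᵥ (diagonal (fun i => (d i : ℂ)) - symPart M) *ᵥ x).re := by
  have h := (posSemidef_diagonal_sub_add_mul_diagonal_inv_mul hd hM).re_dotProduct_nonneg x
  have h2 := congrArg (fun N => (star x ⬝ᵥ N *ᵥ x).re)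
    (two_smul_diagonal_sub_symPart (d := d) M (M * diagonal (fun j => ((d j)⁻¹ : ℂ)) * Mᴴ))
  rw [smul_mulVec, dotProduct_smul, add_mulVec, dotProduct_add, Complex.add_re] at h2
  rw [RCLike.re_to_complex] at h
  norm_num at h2
  linarith

end SymPart

/-- SV approximation with respect to a diagonal degree matrix `D` implies
unit-circle approximation with respect to `D`. -/
theorem stmt_8 {n : ℕ} (A Atil : Matrix (Fin n) (Fin n) ℂ)
    (d : Fin n → ℝ) (hd : ∀ i, 0 ≤ d i) (ε : ℝ) (hε : 0 ≤ ε)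
    (hSV : IsSVApprox ε d d A Atil) :
    ∀ z : ℂ, ‖z‖ = 1 →
      ((Matrix.diagonal fun i => (d i : ℂ)) - symPart (z • A)).PosSemidef ∧
      ∀ x y : Fin n → ℂ,
        ‖star x ⬝ᵥ (z • Atil - z • A).mulVec y‖ ≤
          ε / 2 *
            ((star x ⬝ᵥ ((Matrix.diagonal fun i => (d i : ℂ)) - symPart (z • A)).mulVec x).re +
             (star y ⬝ᵥ ((Matrix.diagonal fun i => (d i : ℂ)) - symPart (z • A)).mulVec y).re) := by
  obtain ⟨hrow, hcol, hE, hF, hbound⟩ := hSV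
  intro z hz
  have hzA : ∀ j, d j = 0 → ∀ i, (z • A) i j = 0 := fun j hj i => by simp [hcol j hj i]
  have hzAH : ∀ j, d j = 0 → ∀ i, (z • A)ᴴ i j = 0 := fun j hj i => by simp [hrow j hj i]
  have hzAA := smul_mul_mul_conjTranspose_smul hz A (diagonal fun j => ((d j)⁻¹ : ℂ))
  have hzAHA := smul_mul_mul_conjTranspose_smul ((norm_star z).trans hz) Aᴴ
    (diagonal fun j => ((d j)⁻¹ : ℂ))
  rw [conjTranspose_conjTranspose, ← conjTranspose_smul] at hzAHA
  refine ⟨posSemidef_diagonal_sub_symPart hd hzA (hzAA ▸ hE), fun x y => ?_⟩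
  calc ‖star x ⬝ᵥ (z • Atil - z • A) *ᵥ y‖ = ‖star x ⬝ᵥ (Atil - A) *ᵥ y‖ := by
        rw [← smul_sub, smul_mulVec, dotProduct_smul, smul_eq_mul, norm_mul, hz, one_mul]
    _ ≤ _ := hbound x y
    _ ≤ ε / 4 * (2 * (star x ⬝ᵥ (diagonal (fun i => (d i : ℂ)) - symPart (z • A)) *ᵥ x).re +
          2 * (star y ⬝ᵥ (diagonal (fun i => (d i : ℂ)) - symPart (z • A)) *ᵥ y).re) := by
      gcongr
      · simpa only [hzAA] using re_dotProduct_le_two_mul_diagonal_sub_symPart hd hzA x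
      · simpa only [hzAHA, symPart_conjTranspose] using
          re_dotProduct_le_two_mul_diagonal_sub_symPart hd hzAH y
    _ = _ := by ring
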